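/- Let A be an abelian category, and suppose ξ₁ : 0 → K₁ → X₁ → Y → 0 is a universal L-extension of Y by K for a finitely generated Γ(K)-submodule L ⊆ Ext¹(Y, K). Then a short exact sequence ξ₂ : 0 → K₂ → X₂ → Y → 0 is a universal L-extension if and only if there exists an isomorphism u : K₁ → K₂ with [ξ₂] = [u.ξ₁]. -/

import Mathlib

set_option linter.unusedSectionVars false

open CategoryTheory Abelian Limits

universe w v u

attribute [local instance] CategoryTheory.Abelian.hasFiniteBiproducts

variable {A : Type u} [Category.{v} A] [Abelian A]

/-- `M` belongs to `add K`: it is a direct summand of a finite direct sum of copies of `K`. -/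
def InAdd (K M : A) : Prop :=
  ∃ (n : ℕ) (s : M ⟶ ⨁ (fun _ : Fin n => K)) (r : (⨁ fun _ : Fin n => K) ⟶ M),
    s ≫ r = 𝟙 M

/-- `α` factors through `α'`. -/
def Factors {X X' Y : A} (α : X ⟶ Y) (α' : X' ⟶ Y) : Prop :=
  ∃ v : X ⟶ X', v ≫ α' = α

/-- `α` and `α'` are right equivalent. -/
def RightEquiv {X X' Y : A} (α : X ⟶ Y) (α' : X' ⟶ Y) : Prop :=
  Factors α α' ∧ Factors α' α

/-- A morphism is right minimal. -/
def RightMinimal {X Y : A} (α : X ⟶ Y) : Prop :=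
  ∀ v : X ⟶ X, v ≫ α = α → IsIso v

/-- A short exact sequence `0 → K → X → Y → 0`. -/
structure SES (K Y : A) where
  X : A
  i : K ⟶ X
  p : X ⟶ Y
  zero : i ≫ p = 0
  shortExact : (ShortComplex.mk i p zero).ShortExact

variable [HasExt.{w} A]

lemma Ext.mk₀_add' {X Y : A} (f g : X ⟶ Y) :
    Ext.mk₀ (f + g) = Ext.mk₀ f + Ext.mk₀ g := by
  letI := HasDerivedCategory.standard A
  apply Ext.ext
  simp [Ext.add_hom, ShiftedHom.mk₀, Functor.map_add]

/-- The class `[ξ] ∈ Ext¹(Y, K)` of a short exact sequence `ξ`. -/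
noncomputable def SES.cls {K Y : A} (E : SES K Y) : Ext Y K 1 :=
  E.shortExact.extClass

/-- The class `[u.ξ]` of the pushout of `ξ` along `u`. -/
noncomputable def SES.push {K Y Z : A} (E : SES K Y) (u : K ⟶ Z) : Ext Y Z 1 :=
  E.cls.comp (Ext.mk₀ u) (add_zero 1)

noncomputable instance extSMulEnd (Y K : A) : SMul (End K) (Ext Y K 1) :=
  ⟨fun g e => e.comp (Ext.mk₀ g) (add_zero 1)⟩

lemma extSmul_def {Y K : A} (g : End K) (e : Ext Y K 1) :
    g • e = e.comp (Ext.mk₀ g) (add_zero 1) := rfl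

/-- `Ext¹(Y, K)` as a left module over `Γ(K) = End K`, via pushout. -/
noncomputable instance extModuleEnd (Y K : A) : Module (End K) (Ext Y K 1) where
  one_smul e := by rw [extSmul_def]; exact Ext.comp_mk₀_id e
  mul_smul g h e := by
    rw [extSmul_def, extSmul_def, extSmul_def,
      Ext.comp_assoc_of_third_deg_zero, Ext.mk₀_comp_mk₀]
    rfl
  smul_add g e f := by
    rw [extSmul_def, extSmul_def, extSmul_def]; exact Ext.add_comp e f _ _
  add_smul g h e := by
    rw [extSmul_def, extSmul_def, extSmul_def, Ext.mk₀_add', Ext.comp_add]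
  zero_smul e := by rw [extSmul_def]; rw [Ext.mk₀_zero, Ext.comp_zero]
  smul_zero g := by rw [extSmul_def]; exact Ext.zero_comp _ _ _ _ _

/-- The connecting map `c(ξ, K) : Hom(K₁, K) → Ext¹(Y, K)`, `u ↦ [u.ξ]`,
as a morphism of left `Γ(K) = End K`-modules. -/
noncomputable def SES.conn {K₁ Y : A} (E : SES K₁ Y) (K : A) :
    (K₁ ⟶ K) →ₗ[End K] Ext Y K 1 where
  toFun u := E.push u
  map_add' u v := by
    dsimp [SES.push]
    rw [Ext.mk₀_add', Ext.comp_add]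
  map_smul' g u := by
    dsimp [SES.push]
    rw [End.smul_right, extSmul_def, Ext.comp_assoc_of_third_deg_zero,
      Ext.mk₀_comp_mk₀]

/-- Right minimality for a morphism of modules. -/
def ModRightMinimal {R : Type*} [Ring R] {M N : Type*} [AddCommGroup M] [AddCommGroup N]
    [Module R M] [Module R N] (c : M →ₗ[R] N) : Prop :=
  ∀ g : M →ₗ[R] M, c.comp g = c → Function.Bijective g

universe w'

/-- The `R`-module `M` admits a projective cover. -/
def HasProjCover (R : Type*) [Ring R] (M : Type w') [AddCommGroup M] [Module R M] : Prop :=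
  ∃ (P : Type w') (_ : AddCommGroup P) (_ : Module R P) (f : P →ₗ[R] M),
    Module.Projective R P ∧ Function.Surjective f ∧ ModRightMinimal f

/-- `ξ` is a universal `L`-extension of `Y` by `K`. -/
def IsUniversalExt (K : A) {K₁ Y : A} (E : SES K₁ Y) (L : Submodule (End K) (Ext Y K 1)) :
    Prop :=
  InAdd K K₁ ∧ LinearMap.range (E.conn K) = L ∧ ModRightMinimal (E.conn K)

lemma InAdd.self (K : A) : InAdd K K := by
  refine ⟨1, biproduct.ι (fun _ : Fin 1 => K) (0 : Fin 1), biproduct.π (fun _ : Fin 1 => K) 0, ?_⟩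
  simp

/-! Writing `M ∈ add K` as `𝟙 M = ∑ j, p j ≫ q j` with `p j : M ⟶ K` gives a Yoneda lemma on
`add K`: morphisms out of `M` and classes in `Ext(Y, M)` are detected by composing with all
`M ⟶ K`, and a `Γ(K)`-linear map out of `Hom(M, K)` whose range lies in that of `c(ξ, K)` is
precomposition with a morphism. Two universal `L`-extensions thus yield `u : K₁ ⟶ K₂` and
`u' : K₂ ⟶ K₁` compatible with the connecting maps, and right minimality of both makes
precomposition with `u ≫ u'` and with `u' ≫ u` bijective, so `u` is an isomorphism. -/

lemma InAdd.exists_sum_comp_eq_id {K M : A} (h : InAdd K M) :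
    ∃ (n : ℕ) (p : Fin n → (M ⟶ K)) (q : Fin n → (K ⟶ M)), ∑ j, p j ≫ q j = 𝟙 M := by
  obtain ⟨n, s, r, hsr⟩ := h
  let F := fun _ : Fin n => K
  refine ⟨n, fun j => s ≫ biproduct.π F j, fun j => biproduct.ι F j ≫ r, ?_⟩
  calc _ = s ≫ (∑ j, biproduct.π F j ≫ biproduct.ι F j) ≫ r := by
        simp only [Preadditive.sum_comp, Preadditive.comp_sum, Category.assoc]
    _ = 𝟙 M := by rw [biproduct.total, Category.id_comp, hsr]

lemma InAdd.of_iso {K M M' : A} (h : InAdd K M) (e : M ≅ M') : InAdd K M' := by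
  obtain ⟨n, s, r, hsr⟩ := h
  exact ⟨n, e.inv ≫ s, r ≫ e.hom, by simp [reassoc_of% hsr]⟩

lemma InAdd.ext_of_comp_mk₀ {K M Y : A} {d : ℕ} (h : InAdd K M) {e₁ e₂ : Ext Y M d}
    (hv : ∀ v : M ⟶ K, e₁.comp (Ext.mk₀ v) (add_zero d) = e₂.comp (Ext.mk₀ v) (add_zero d)) :
    e₁ = e₂ := by
  obtain ⟨n, p, q, hpq⟩ := h.exists_sum_comp_eq_id
  have expand : ∀ e : Ext Y M d,
      e = ∑ j, (e.comp (Ext.mk₀ (p j)) (add_zero d)).comp (Ext.mk₀ (q j)) (add_zero d) := by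
    intro e
    conv_lhs => rw [← e.comp_mk₀_id, ← hpq]
    simp only [Ext.mk₀_sum, Ext.comp_sum, ← Ext.mk₀_comp_mk₀, Ext.comp_assoc_of_third_deg_zero]
  rw [expand e₁, expand e₂]
  simp only [hv]

lemma InAdd.bijective_precomp {K M K₁ K₂ : A} (hM : InAdd K M) (u : K₁ ⟶ K₂)
    (hu : Function.Bijective fun v : K₂ ⟶ K => u ≫ v) :
    Function.Bijective fun v : K₂ ⟶ M => u ≫ v := by
  obtain ⟨n, p, q, hpq⟩ := hM.exists_sum_comp_eq_id
  have expand : ∀ {X : A} (a : X ⟶ M), a = ∑ j, (a ≫ p j) ≫ q j := fun a => by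
    simp only [Category.assoc, ← Preadditive.comp_sum, hpq, Category.comp_id]
  constructor
  · intro a b hab
    have hj : ∀ j, a ≫ p j = b ≫ p j := fun j =>
      hu.1 (by simpa only [← Category.assoc] using congrArg (· ≫ p j) hab)
    rw [expand a, expand b]
    simp only [hj]
  · intro w
    choose t ht using fun j => hu.2 (w ≫ p j)
    refine ⟨∑ j, t j ≫ q j, ?_⟩
    simp only [Preadditive.comp_sum, ← Category.assoc, ht]
    exact (expand w).symm

lemma isIso_of_bijective_precomp {K K₁ K₂ : A} (h₁ : InAdd K K₁) (h₂ : InAdd K K₂)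
    (u : K₁ ⟶ K₂) (hu : Function.Bijective fun v : K₂ ⟶ K => u ≫ v) : IsIso u := by
  obtain ⟨w, hw⟩ := (h₁.bijective_precomp u hu).2 (𝟙 K₁)
  refine ⟨w, hw, (h₂.bijective_precomp u hu).1 ?_⟩
  simp only [← Category.assoc, hw, Category.id_comp, Category.comp_id]

lemma InAdd.exists_comp_eq_of_range_le {K K₁ K₂ : A} {N : Type*} [AddCommGroup N]
    [Module (End K) N] (h : InAdd K K₂) (c₁ : (K₁ ⟶ K) →ₗ[End K] N)
    (c₂ : (K₂ ⟶ K) →ₗ[End K] N) (hle : LinearMap.range c₂ ≤ LinearMap.range c₁) :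
    ∃ u : K₁ ⟶ K₂, ∀ v : K₂ ⟶ K, c₁ (u ≫ v) = c₂ v := by
  obtain ⟨n, p, q, hpq⟩ := h.exists_sum_comp_eq_id
  choose w hw using fun j => hle ⟨p j, rfl⟩
  refine ⟨∑ j, w j ≫ q j, fun v => ?_⟩
  have hv : v = ∑ j, (show End K from q j ≫ v) • p j := by
    simp only [End.smul_right, ← Category.assoc, ← Preadditive.sum_comp, hpq, Category.id_comp]
  calc c₁ ((∑ j, w j ≫ q j) ≫ v) = ∑ j, (show End K from q j ≫ v) • c₁ (w j) := by
        simp only [Preadditive.sum_comp, Category.assoc, ← map_smul, End.smul_right, map_sum]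
    _ = c₂ v := by
        conv_rhs => rw [hv]
        simp only [hw, map_sum, map_smul]

def precompₗ (K : A) {K₁ K₂ : A} (u : K₁ ⟶ K₂) : (K₂ ⟶ K) →ₗ[End K] (K₁ ⟶ K) where
  toFun v := u ≫ v
  map_add' v v' := Preadditive.comp_add _ _ _ _ _ _
  map_smul' g v := by simp only [End.smul_right, Category.assoc, RingHom.id_apply]

@[simp] lemma precompₗ_apply (K : A) {K₁ K₂ : A} (u : K₁ ⟶ K₂) (v : K₂ ⟶ K) :
    precompₗ K u v = u ≫ v := rfl

lemma precompₗ_comp (K : A) {K₁ K₂ K₃ : A} (u : K₁ ⟶ K₂) (u' : K₂ ⟶ K₃) :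
    precompₗ K (u ≫ u') = precompₗ K u ∘ₗ precompₗ K u' :=
  LinearMap.ext fun v => Category.assoc u u' v

def precompLinearEquiv (K : A) {K₁ K₂ : A} (e : K₁ ≅ K₂) : (K₂ ⟶ K) ≃ₗ[End K] (K₁ ⟶ K) :=
  LinearEquiv.ofLinearMap (precompₗ K e.hom) (precompₗ K e.inv)
    (LinearMap.ext fun _ => e.hom_inv_id_assoc _) (LinearMap.ext fun _ => e.inv_hom_id_assoc _)

lemma ModRightMinimal.comp_linearEquiv {R M M' N : Type*} [Ring R] [AddCommGroup M]
    [AddCommGroup M'] [AddCommGroup N] [Module R M] [Module R M'] [Module R N]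
    {c : M →ₗ[R] N} (hc : ModRightMinimal c) (e : M' ≃ₗ[R] M) :
    ModRightMinimal (c ∘ₗ e.toLinearMap) := by
  intro g hg
  have hconj : Function.Bijective (e.toLinearMap ∘ₗ g ∘ₗ e.symm.toLinearMap) :=
    hc _ <| LinearMap.ext fun x => by simpa using LinearMap.congr_fun hg (e.symm x)
  convert (e.symm.bijective.comp hconj).comp e.bijective
  ext x
  simp

lemma SES.conn_apply {K₁ Y : A} (E : SES K₁ Y) {K : A} (v : K₁ ⟶ K) :
    E.conn K v = E.push v := rfl

lemma SES.push_comp_mk₀ {K₁ K₂ K Y : A} (E : SES K₁ Y) (u : K₁ ⟶ K₂) (v : K₂ ⟶ K) :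
    (E.push u).comp (Ext.mk₀ v) (add_zero 1) = E.push (u ≫ v) := by
  rw [SES.push, SES.push, Ext.comp_assoc_of_third_deg_zero, Ext.mk₀_comp_mk₀]

lemma SES.conn_eq_comp_precompₗ {K₁ K₂ K Y : A} {E₁ : SES K₁ Y} {E₂ : SES K₂ Y}
    {u : K₁ ⟶ K₂} (hcls : E₂.cls = E₁.push u) :
    E₂.conn K = E₁.conn K ∘ₗ precompₗ K u :=
  LinearMap.ext fun v => by rw [SES.conn_apply, SES.push, hcls, SES.push_comp_mk₀]; rfl

lemma IsUniversalExt.of_isIso {K K₁ K₂ Y : A} {L : Submodule (End K) (Ext Y K 1)}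
    {E₁ : SES K₁ Y} (h₁ : IsUniversalExt K E₁ L) {E₂ : SES K₂ Y} (u : K₁ ⟶ K₂) [IsIso u]
    (hcls : E₂.cls = E₁.push u) : IsUniversalExt K E₂ L := by
  obtain ⟨hadd, hrange, hmin⟩ := h₁
  have hconn : E₂.conn K = E₁.conn K ∘ₗ (precompLinearEquiv K (asIso u)).toLinearMap :=
    SES.conn_eq_comp_precompₗ hcls
  refine ⟨hadd.of_iso (asIso u), ?_, ?_⟩
  · rw [hconn, LinearMap.range_comp_of_range_eq_top _ (LinearEquiv.range _), hrange]
  · rw [hconn]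
    exact hmin.comp_linearEquiv _

lemma IsUniversalExt.exists_isIso {K K₁ K₂ Y : A} {L : Submodule (End K) (Ext Y K 1)}
    {E₁ : SES K₁ Y} {E₂ : SES K₂ Y} (h₁ : IsUniversalExt K E₁ L)
    (h₂ : IsUniversalExt K E₂ L) : ∃ u : K₁ ⟶ K₂, IsIso u ∧ E₂.cls = E₁.push u := by
  obtain ⟨hadd₁, hrange₁, hmin₁⟩ := h₁
  obtain ⟨hadd₂, hrange₂, hmin₂⟩ := h₂
  obtain ⟨u, hu⟩ := hadd₂.exists_comp_eq_of_range_le (E₁.conn K) (E₂.conn K)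
    (by rw [hrange₁, hrange₂])
  obtain ⟨u', hu'⟩ := hadd₁.exists_comp_eq_of_range_le (E₂.conn K) (E₁.conn K)
    (by rw [hrange₁, hrange₂])
  have huu' : Function.Bijective (precompₗ K (u ≫ u')) :=
    hmin₁ _ (LinearMap.ext fun v => by simp only [LinearMap.comp_apply, precompₗ_apply,
      Category.assoc, hu, hu'])
  have hu'u : Function.Bijective (precompₗ K (u' ≫ u)) :=
    hmin₂ _ (LinearMap.ext fun v => by simp only [LinearMap.comp_apply, precompₗ_apply,
      Category.assoc, hu, hu'])
  rw [precompₗ_comp] at huu' hu'u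
  have hbij : Function.Bijective (precompₗ K u) :=
    ⟨Function.Injective.of_comp hu'u.1, Function.Surjective.of_comp huu'.2⟩
  refine ⟨u, isIso_of_bijective_precomp hadd₁ hadd₂ u hbij,
    hadd₂.ext_of_comp_mk₀ fun v => ?_⟩
  rw [SES.push_comp_mk₀, ← SES.conn_apply, hu]
  rfl

theorem stmt12_general {K K₁ K₂ Y : A} (L : Submodule (End K) (Ext Y K 1))
    (E₁ : SES K₁ Y) (h₁ : IsUniversalExt K E₁ L) (E₂ : SES K₂ Y) :
    IsUniversalExt K E₂ L ↔ ∃ u : K₁ ⟶ K₂, IsIso u ∧ E₂.cls = E₁.push u := by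
  refine ⟨h₁.exists_isIso, ?_⟩
  rintro ⟨u, hu, hcls⟩
  exact h₁.of_isIso u hcls

/-- if `ξ₁` is a universal `L`-extension, then `ξ₂` is a universal
`L`-extension iff there is an isomorphism `u : K₁ ⟶ K₂` with `[ξ₂] = [u.ξ₁]`. -/
theorem stmt12 {K K₁ K₂ Y : A} (L : Submodule (End K) (Ext Y K 1)) (hL : L.FG)
    (E₁ : SES K₁ Y) (h₁ : IsUniversalExt K E₁ L) (E₂ : SES K₂ Y) :
    IsUniversalExt K E₂ L ↔ ∃ u : K₁ ⟶ K₂, IsIso u ∧ E₂.cls = E₁.push u :=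
  stmt12_general L E₁ h₁ E₂
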